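/- arXiv:2304.08149 — 4 statements merged into one kernel-verified Lean document; each statement's English description precedes it below -/
import Mathlib

section
/- Trivial delta method, bilinear form: let m be a positive integer and let a, b : ℤ → ℂ be finitely supported functions such that |n − r| < m whenever a(n) ≠ 0 and b(r) ≠ 0. Then Σ_{n∈ℤ} a(n) b(n) = (1/m) Σ_{c ∣ m} Σ_{α=1,…,c, gcd(α,c)=1} ( Σ_{n∈ℤ} a(n) e(αn/c) ) · ( Σ_{r∈ℤ} b(r) e(−αr/c) ). -/
/-!
Expanding the product turns the right-hand side into `Σ_{n,r} a(n) b(r) D(n - r)` with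
`D(k) = Σ_{c ∣ m} Σ_{(α,c)=1} e(αk/c)`. Writing `d/m` (`1 ≤ d ≤ m`) in lowest terms `α/c`
identifies `D(k)` with the complete sum `Σ_{d=1}^m e(dk/m)`, which is `m` if `m ∣ k` and `0`
otherwise. On the supports `|n - r| < m`, so only the diagonal `n = r` survives.
-/

open scoped Real BigOperators

/-- `e x = exp(2πix)`. -/
noncomputable def e (x : ℝ) : ℂ := Complex.exp (2 * Real.pi * Complex.I * x)

open Finset

lemma e_add (x y : ℝ) : e (x + y) = e x * e y := by
  simp only [e, Complex.ofReal_add, mul_add, Complex.exp_add]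

lemma e_nat_mul (n : ℕ) (x : ℝ) : e (n * x) = e x ^ n := by
  rw [e, e, ← Complex.exp_nat_mul]
  push_cast
  ring_nf

lemma e_eq_one_iff (x : ℝ) : e x = 1 ↔ ∃ n : ℤ, x = n := by
  rw [e, Complex.exp_eq_one_iff]
  refine exists_congr fun n => ?_
  rw [mul_comm (n : ℂ), mul_right_inj' Complex.two_pi_I_ne_zero]
  exact_mod_cast Iff.rfl

lemma sum_Icc_one_pow_eq_mul_geom_sum {R : Type*} [Semiring R] (x : R) (m : ℕ) :
    ∑ d ∈ Icc 1 m, x ^ d = x * ∑ i ∈ range m, x ^ i := by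
  simp_rw [mul_sum, ← pow_succ', range_eq_Ico, sum_Ico_add' (fun i => x ^ i), zero_add,
    Ico_add_one_right_eq_Icc]

lemma sum_Icc_e_mul_div {m : ℕ} (hm : 0 < m) (k : ℤ) :
    ∑ d ∈ Icc 1 m, e (d * k / m) = if (m : ℤ) ∣ k then (m : ℂ) else 0 := by
  have hm0 : (m : ℝ) ≠ 0 := by positivity
  simp_rw [mul_div_assoc, e_nat_mul]
  split_ifs with hdvd
  · obtain ⟨t, rfl⟩ := hdvd
    have : e (m * t / m) = 1 := (e_eq_one_iff _).2 ⟨t, by field_simp⟩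
    simp [this]
  · have hω : e (k / m) ≠ 1 := by
      rintro h
      obtain ⟨n, hn⟩ := (e_eq_one_iff _).1 h
      rw [div_eq_iff hm0] at hn
      exact hdvd ⟨n, by rw [mul_comm]; exact_mod_cast hn⟩
    have hωm : e (k / m) ^ m = 1 := by
      rw [← e_nat_mul, mul_div_cancel₀ _ hm0, e_eq_one_iff]
      exact ⟨k, rfl⟩
    rw [sum_Icc_one_pow_eq_mul_geom_sum, geom_sum_eq hω, hωm, sub_self, zero_div, mul_zero]

lemma gcd_mul_div_eq_div_of_coprime {α c m : ℕ} (hc : c ∣ m) (hα : α.Coprime c) :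
    (α * (m / c)).gcd m = m / c := by
  have := Nat.gcd_mul_right α (m / c) c
  rwa [Nat.mul_div_cancel' hc, hα, one_mul] at this

theorem sum_divisors_sum_coprime_div {K M : Type*} [Field K] [CharZero K] [AddCommMonoid M]
    (m : ℕ) (f : K → M) :
    ∑ c ∈ m.divisors, ∑ α ∈ (Icc 1 c).filter (fun α => α.gcd c = 1), f (α / c) =
      ∑ d ∈ Icc 1 m, f (d / m) := by
  rw [sum_sigma']
  refine sum_nbij' (fun x => x.2 * (m / x.1)) (fun d => ⟨m / d.gcd m, d / d.gcd m⟩)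
    ?_ ?_ ?_ ?_ ?_
  · rintro ⟨c, α⟩ hx
    simp only [mem_sigma, mem_filter, mem_Icc] at hx ⊢
    obtain ⟨hc, ⟨hα, hαc⟩, -⟩ := hx
    have hmc : 0 < m / c := Nat.div_pos (Nat.divisor_le hc) (Nat.pos_of_mem_divisors hc)
    exact ⟨Nat.mul_pos hα hmc,
      (Nat.mul_le_mul_right _ hαc).trans (Nat.mul_div_cancel' (Nat.dvd_of_mem_divisors hc)).le⟩
  · intro d hd
    simp only [mem_sigma, Nat.mem_divisors, mem_filter, mem_Icc] at hd ⊢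
    have hg : 0 < d.gcd m := Nat.gcd_pos_of_pos_left _ hd.1
    exact ⟨⟨Nat.div_dvd_of_dvd (Nat.gcd_dvd_right d m), by omega⟩,
      ⟨Nat.div_pos (Nat.gcd_le_left _ hd.1) hg, Nat.div_le_div_right hd.2⟩,
      Nat.coprime_div_gcd_div_gcd hg⟩
  · rintro ⟨c, α⟩ hx
    simp only [mem_sigma, mem_filter] at hx
    obtain ⟨hc, -, hcop⟩ := hx
    have hmc : 0 < m / c := Nat.div_pos (Nat.divisor_le hc) (Nat.pos_of_mem_divisors hc)
    have hc' := Nat.dvd_of_mem_divisors hc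
    simp [gcd_mul_div_eq_div_of_coprime hc' hcop,
      Nat.div_div_self hc' (Nat.ne_zero_of_mem_divisors hc), Nat.mul_div_cancel α hmc]
  · intro d hd
    simp only [mem_Icc] at hd
    rw [Nat.div_div_self (Nat.gcd_dvd_right d m) (by omega),
      Nat.div_mul_cancel (Nat.gcd_dvd_left d m)]
  · rintro ⟨c, α⟩ hx
    obtain ⟨hc, hm⟩ := Nat.mem_divisors.1 (mem_sigma.1 hx).1
    have hc0 : (c : K) ≠ 0 := by exact_mod_cast (Nat.pos_of_dvd_of_pos hc (by omega)).ne'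
    have hm0 : (m : K) ≠ 0 := by exact_mod_cast hm
    simp only
    push_cast [Nat.cast_div hc hc0]
    field_simp

theorem sum_divisors_sum_coprime_e {m : ℕ} (hm : 0 < m) (k : ℤ) :
    ∑ c ∈ m.divisors, ∑ α ∈ (Icc 1 c).filter (fun α => α.gcd c = 1), e (α * k / c) =
      if (m : ℤ) ∣ k then (m : ℂ) else 0 := by
  have := sum_divisors_sum_coprime_div m fun x : ℝ => e (x * k)
  simp only [div_mul_eq_mul_div] at this
  rw [this, sum_Icc_e_mul_div hm]

theorem mul_sum_mul_eq_sum_divisors {m : ℕ} (hm : 0 < m) (S : Finset ℤ) (a b : ℤ → ℂ)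
    (hclose : ∀ n ∈ S, ∀ r ∈ S, a n ≠ 0 → b r ≠ 0 → |n - r| < (m : ℤ)) :
    (m : ℂ) * ∑ n ∈ S, a n * b n =
      ∑ c ∈ m.divisors, ∑ α ∈ (Icc 1 c).filter (fun α => α.gcd c = 1),
        (∑ n ∈ S, a n * e (α * n / c)) * (∑ r ∈ S, b r * e (-(α * r / c))) := by
  have hexpand (c α : ℕ) :
      (∑ n ∈ S, a n * e (α * n / c)) * (∑ r ∈ S, b r * e (-(α * r / c))) =
        ∑ n ∈ S, ∑ r ∈ S, a n * b r * e (α * (n - r : ℤ) / c) := by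
    rw [sum_mul_sum]
    refine sum_congr rfl fun n _ => sum_congr rfl fun r _ => ?_
    rw [mul_mul_mul_comm, ← e_add]
    push_cast
    ring_nf
  have hdiag : ∀ n ∈ S, ∑ r ∈ S, a n * b r * (if (m : ℤ) ∣ n - r then (m : ℂ) else 0) =
      m * (a n * b n) := by
    intro n hn
    rw [sum_eq_single_of_mem n hn]
    · simp only [sub_self, dvd_zero, if_true]
      ring
    intro r hr hrn
    by_cases hab : a n * b r = 0
    · simp [hab]
    obtain ⟨ha, hb⟩ := mul_ne_zero_iff.1 hab
    rw [if_neg, mul_zero]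
    exact fun hdvd =>
      hrn (sub_eq_zero.1 (Int.eq_zero_of_abs_lt_dvd hdvd (hclose n hn r hr ha hb))).symm
  calc (m : ℂ) * ∑ n ∈ S, a n * b n
      = ∑ n ∈ S, ∑ r ∈ S, a n * b r * (if (m : ℤ) ∣ n - r then (m : ℂ) else 0) := by
        rw [mul_sum]
        exact sum_congr rfl fun n hn => (hdiag n hn).symm
    _ = ∑ n ∈ S, ∑ r ∈ S, a n * b r * ∑ c ∈ m.divisors,
          ∑ α ∈ (Icc 1 c).filter (fun α => α.gcd c = 1), e (α * (n - r : ℤ) / c) := by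
        simp only [sum_divisors_sum_coprime_e hm]
    _ = _ := by
        simp_rw [hexpand, mul_sum, sum_sigma' m.divisors]
        exact (sum_congr rfl fun n _ => sum_comm).trans sum_comm

/-- Trivial delta method, bilinear form: if `a, b : ℤ → ℂ` are finitely supported and
`|n − r| < m` whenever `a n ≠ 0` and `b r ≠ 0`, then
`Σ_n a(n) b(n) = (1/m) Σ_{c ∣ m} Σ_{α mod c, (α,c)=1} (Σ_n a(n) e(αn/c)) (Σ_r b(r) e(−αr/c))`. -/
theorem trivial_delta_bilinear (m : ℕ) (hm : 0 < m) (a b : ℤ → ℂ)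
    (ha : (Function.support a).Finite) (hb : (Function.support b).Finite)
    (hclose : ∀ n r : ℤ, a n ≠ 0 → b r ≠ 0 → |n - r| < (m : ℤ)) :
    ∑ᶠ n : ℤ, a n * b n =
      (1 / (m : ℂ)) *
        ∑ c ∈ Nat.divisors m,
          ∑ α ∈ (Finset.Icc 1 c).filter (fun α => Nat.gcd α c = 1),
            (∑ᶠ n : ℤ, a n * e ((α : ℝ) * (n : ℝ) / (c : ℝ))) *
              (∑ᶠ r : ℤ, b r * e (-((α : ℝ) * (r : ℝ) / (c : ℝ)))) := by
  set S := ha.toFinset ∪ hb.toFinset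
  have hfin (g f : ℤ → ℂ) (hg : Function.support g ⊆ S) : ∑ᶠ n, g n * f n = ∑ n ∈ S, g n * f n :=
    finsum_eq_finsetSum_of_support_subset _ ((Function.support_mul_subset_left _ _).trans hg)
  have hA : Function.support a ⊆ S := by simp [S]
  have hB : Function.support b ⊆ S := by simp [S]
  simp only [hfin a _ hA, hfin b _ hB]
  rw [← mul_sum_mul_eq_sum_divisors hm S a b fun n _ r _ => hclose n r, one_div,
    inv_mul_cancel_left₀ (by exact_mod_cast hm.ne')]
end

section
/- Kloosterman completion identity: let q₀ be a prime, q₁ an integer coprime to q₀, K₀ : ℤ → ℂ a q₀-periodic function, r an integer, and n an integer not divisible by q₀. Let q̄₁ be an integer with q̄₁ q₁ ≡ 1 (mod q₀), and for α coprime to q₀ let ᾱ denote its inverse mod q₀. Then Σ_{α=1}^{q₀−1} K̂₀((r − αq₁) q̄₁; q₀) e(−ᾱ n / q₀) = Σ_{x=0}^{q₀−1} K₀(x) e(r q̄₁ x / q₀) Kl₂(nx; q₀). -/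
open scoped Real BigOperators

/-- Normalized Fourier transform of an `s`-periodic function `F : ℤ → ℂ`:
`F̂(n; s) = s^{−1/2} Σ_{x=0}^{s−1} F(x) e(nx/s)`. -/
noncomputable def Fhat (s : ℕ) (F : ℤ → ℂ) (n : ℤ) : ℂ :=
  (Real.sqrt s : ℂ)⁻¹ * ∑ x ∈ Finset.range s, F x * e ((n : ℝ) * (x : ℝ) / (s : ℝ))

/-- The normalized Kloosterman sum `Kl₂(m; p) = p^{−1/2} Σ_{t=1}^{p−1} e((t + m t̄)/p)`,
where `t̄` is the inverse of `t` mod `p`. -/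
noncomputable def Kl2 (p : ℕ) (m : ℤ) : ℂ :=
  (Real.sqrt p : ℂ)⁻¹ *
    ∑ t ∈ Finset.Icc 1 (p - 1),
      e ((((t : ℤ) + m * ((((t : ℕ) : ZMod p)⁻¹).val : ℤ) : ℤ) : ℝ) / (p : ℝ))

/-!
Both sides open up into `q₀^{-1/2} Σ_x K₀(x) Σ_{a ≠ 0} e(·/q₀)` once `K̂₀` and `Kl₂` are expanded
and, on the left, the order of summation is swapped and `q̄₁ q₁ ≡ 1` is used. The inner sums are
`Σ_{a ≠ 0} e((r q̄₁ x − a x − ā n)/q₀)` and `Σ_{t ≠ 0} e((r q̄₁ x + t + n x t̄)/q₀)`, and the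
substitution `t = −n ā`, an involution of `(ℤ/q₀)ˣ` because `q₀ ∤ n`, matches them term by term.
-/

open Finset

lemma e_intCast_div (N : ℕ) [NeZero N] (j : ℤ) :
    e ((j : ℝ) / N) = ZMod.stdAddChar (j : ZMod N) := by
  rw [ZMod.stdAddChar_coe, e]
  push_cast
  ring_nf

lemma ZMod.sum_Icc_natCast_eq_sum_ne_zero (N : ℕ) [NeZero N] {M : Type*} [AddCommMonoid M]
    (f : ZMod N → M) : ∑ t ∈ Icc 1 (N - 1), f t = ∑ a : ZMod N with a ≠ 0, f a := by
  refine sum_nbij' (fun t => (t : ZMod N)) ZMod.val (fun t ht => ?_) (fun a ha => ?_)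
    (fun t ht => ?_) (fun a _ => ZMod.natCast_zmod_val a) (fun _ _ => rfl)
  · rw [mem_Icc] at ht
    simp only [mem_filter, mem_univ, true_and, ne_eq]
    rw [ZMod.natCast_eq_zero_iff]
    exact fun h => absurd (Nat.le_of_dvd (by omega) h) (by omega)
  · simp only [mem_filter, mem_univ, true_and] at ha
    have := ZMod.val_lt a
    have := (ZMod.val_ne_zero a).mpr ha
    rw [mem_Icc]
    omega
  · rw [mem_Icc] at ht
    exact ZMod.val_cast_of_lt (by omega)

lemma sum_ne_zero_comp_neg_mul_inv {F M : Type*} [Field F] [Fintype F] [DecidableEq F]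
    [AddCommMonoid M] {n : F} (hn : n ≠ 0) (g : F → M) :
    ∑ a : F with a ≠ 0, g (-n * a⁻¹) = ∑ a : F with a ≠ 0, g a := by
  have hinv : ∀ a : F, a ≠ 0 → -n * (-n * a⁻¹)⁻¹ = a := fun a ha => by field_simp
  refine sum_nbij' (fun a => -n * a⁻¹) (fun a => -n * a⁻¹) (fun a ha => ?_) (fun a ha => ?_)
    (fun a ha => hinv a (by simpa using ha)) (fun a ha => hinv a (by simpa using ha))
    (fun _ _ => rfl)
  all_goals simp_all

lemma sum_ne_zero_kloosterman_substitution {F M : Type*} [Field F] [Fintype F] [DecidableEq F]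
    [AddCommMonoid M] {n : F} (hn : n ≠ 0) (x : F) (g : F → M) :
    ∑ a : F with a ≠ 0, g (-(a * x) - a⁻¹ * n) =
      ∑ t : F with t ≠ 0, g (t + n * x * t⁻¹) := by
  rw [← sum_ne_zero_comp_neg_mul_inv hn]
  refine sum_congr rfl fun a ha => congrArg g ?_
  have ha : a ≠ 0 := by simpa using ha
  field_simp
  ring

lemma Fhat_eq_sum_stdAddChar (N : ℕ) [NeZero N] (F : ℤ → ℂ) (m : ℤ) :
    Fhat N F m =
      (Real.sqrt N : ℂ)⁻¹ * ∑ x ∈ range N, F x * ZMod.stdAddChar (m * x : ZMod N) := by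
  rw [Fhat]
  congr 1
  refine sum_congr rfl fun x _ => ?_
  have := e_intCast_div N (m * x)
  push_cast at this
  rw [this]

lemma Kl2_eq_sum_stdAddChar (N : ℕ) [NeZero N] (m : ℤ) :
    Kl2 N m = (Real.sqrt N : ℂ)⁻¹ *
      ∑ t : ZMod N with t ≠ 0, ZMod.stdAddChar (t + (m : ZMod N) * t⁻¹) := by
  rw [Kl2, ← ZMod.sum_Icc_natCast_eq_sum_ne_zero N
    (fun t => ZMod.stdAddChar (t + (m : ZMod N) * t⁻¹))]
  congr 1
  refine sum_congr rfl fun t _ => ?_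
  rw [e_intCast_div]
  push_cast [ZMod.natCast_val, ZMod.cast_id]
  rfl

section

variable (N : ℕ) [NeZero N] (K : ℤ → ℂ) (n : ℤ)

lemma sum_Fhat_mul_e_neg_inv_eq {q₁ qb₁ : ℤ} (hq₁ : (qb₁ * q₁ : ZMod N) = 1) (r : ℤ) :
    ∑ α ∈ Icc 1 (N - 1), Fhat N K ((r - (α : ℤ) * q₁) * qb₁) *
        e (-((((α : ZMod N)⁻¹).val : ℝ) * (n : ℝ) / N)) =
      (Real.sqrt N : ℂ)⁻¹ * ∑ x ∈ range N, K x * ∑ a : ZMod N with a ≠ 0,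
        ZMod.stdAddChar (((r * qb₁ : ℤ) : ZMod N) * (x : ZMod N) +
          (-(a * (x : ZMod N)) - a⁻¹ * (n : ZMod N))) := by
  have he_inv (α : ℕ) : e (-((((α : ZMod N)⁻¹).val : ℝ) * n) / N) =
      ZMod.stdAddChar (-(α : ZMod N)⁻¹ * (n : ZMod N)) := by
    rw [show -((((α : ZMod N)⁻¹).val : ℝ) * n) =
        ((-(((α : ZMod N)⁻¹).val : ℤ) * n : ℤ) : ℝ) by push_cast; ring, e_intCast_div]
    push_cast [ZMod.natCast_val, ZMod.cast_id]
    rfl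
  simp only [Fhat_eq_sum_stdAddChar, ← neg_div, he_inv, mul_assoc, sum_mul, ← mul_sum]
  push_cast
  rw [ZMod.sum_Icc_natCast_eq_sum_ne_zero N (fun a : ZMod N => ∑ x ∈ range N, K x *
    (ZMod.stdAddChar (((r : ZMod N) - a * (q₁ : ZMod N)) * (qb₁ : ZMod N) * (x : ZMod N)) *
      ZMod.stdAddChar (-a⁻¹ * (n : ZMod N)))), sum_comm]
  refine congrArg _ (sum_congr rfl fun x _ => ?_)
  rw [mul_sum]
  refine sum_congr rfl fun a _ => ?_
  rw [← AddChar.map_add_eq_mul]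
  congr 2
  linear_combination -((x : ZMod N) * a) * hq₁

lemma sum_mul_e_mul_Kl2_eq (b : ℤ) :
    ∑ x ∈ range N, K x * e ((b : ℝ) * (x : ℝ) / N) * Kl2 N (n * (x : ℤ)) =
      (Real.sqrt N : ℂ)⁻¹ * ∑ x ∈ range N, K x * ∑ t : ZMod N with t ≠ 0,
        ZMod.stdAddChar
          ((b : ZMod N) * (x : ZMod N) + (t + (n : ZMod N) * (x : ZMod N) * t⁻¹)) := by
  rw [mul_sum]
  refine sum_congr rfl fun x _ => ?_
  have := e_intCast_div N (b * x)
  push_cast at this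
  rw [Kl2_eq_sum_stdAddChar, this]
  simp only [mul_sum]
  refine sum_congr rfl fun t _ => ?_
  push_cast
  simp only [AddChar.map_add_eq_mul]
  ring

end

theorem kloosterman_completion_general (q₀ : ℕ) (hq₀ : q₀.Prime) (q₁ : ℤ)
    (K₀ : ℤ → ℂ) (r n : ℤ) (hn : ¬ (q₀ : ℤ) ∣ n)
    (qb₁ : ℤ) (hqb₁ : qb₁ * q₁ ≡ 1 [ZMOD (q₀ : ℤ)]) :
    ∑ α ∈ Finset.Icc 1 (q₀ - 1),
        Fhat q₀ K₀ ((r - (α : ℤ) * q₁) * qb₁) *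
          e (-(((((α : ℕ) : ZMod q₀)⁻¹).val : ℝ) * (n : ℝ) / (q₀ : ℝ))) =
      ∑ x ∈ Finset.range q₀,
        K₀ x * e (((r * qb₁ : ℤ) : ℝ) * (x : ℝ) / (q₀ : ℝ)) * Kl2 q₀ (n * (x : ℤ)) := by
  have := Fact.mk hq₀
  have hn' : (n : ZMod q₀) ≠ 0 := by rwa [ne_eq, ZMod.intCast_zmod_eq_zero_iff_dvd]
  have hq₁ : (qb₁ * q₁ : ZMod q₀) = 1 := by
    exact_mod_cast (ZMod.intCast_eq_intCast_iff _ _ _).mpr hqb₁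
  rw [sum_Fhat_mul_e_neg_inv_eq q₀ K₀ n hq₁, sum_mul_e_mul_Kl2_eq]
  refine congrArg _ (sum_congr rfl fun x _ => ?_)
  rw [sum_ne_zero_kloosterman_substitution hn' _ (fun u => ZMod.stdAddChar (_ + u))]

/-- Kloosterman completion identity: for `q₀` prime, `q₁` coprime to `q₀`, `K₀`
`q₀`-periodic, `r` an integer and `n` an integer with `q₀ ∤ n`,
`Σ_{α=1}^{q₀−1} K̂₀((r − αq₁) q̄₁; q₀) e(−ᾱ n / q₀)
  = Σ_{x=0}^{q₀−1} K₀(x) e(r q̄₁ x / q₀) Kl₂(nx; q₀)`. -/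
theorem kloosterman_completion (q₀ : ℕ) (hq₀ : q₀.Prime) (q₁ : ℤ)
    (hcop : IsCoprime (q₁ : ℤ) (q₀ : ℤ)) (K₀ : ℤ → ℂ)
    (hK₀ : ∀ x : ℤ, K₀ (x + (q₀ : ℤ)) = K₀ x) (r n : ℤ) (hn : ¬ (q₀ : ℤ) ∣ n)
    (qb₁ : ℤ) (hqb₁ : qb₁ * q₁ ≡ 1 [ZMOD (q₀ : ℤ)]) :
    ∑ α ∈ Finset.Icc 1 (q₀ - 1),
        Fhat q₀ K₀ ((r - (α : ℤ) * q₁) * qb₁) *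
          e (-(((((α : ℕ) : ZMod q₀)⁻¹).val : ℝ) * (n : ℝ) / (q₀ : ℝ))) =
      ∑ x ∈ Finset.range q₀,
        K₀ x * e (((r * qb₁ : ℤ) : ℝ) * (x : ℝ) / (q₀ : ℝ)) * Kl2 q₀ (n * (x : ℤ)) :=
  kloosterman_completion_general q₀ hq₀ q₁ K₀ r n hn qb₁ hqb₁
end

section
/- Factorization of the L-sums under twisted multiplicativity: let q₀, q₁ be distinct primes, q = q₀q₁, let K₀ : ℤ → ℂ be q₀-periodic, K₁ : ℤ → ℂ be q₁-periodic, and K(x) = K₀(x)K₁(x). For integers α, β, u define L_{α,β}(u; q) = q^{−1/2} Σ_{b mod q, gcd(b+βu, q)=1} K̂(b; q) e(α · \overline{(b+βu)} / q), where \overline{(b+βu)} is the inverse of b+βu mod q; define analogously L⁰_{α,β}(u) with K̂₀(·; q₀) and modulus q₀, and L¹_{α,β}(u) with K̂₁(·; q₁) and modulus q₁. Then for all integers α, β, u one has L_{α,β}(u q₁; q) = L⁰_{α q̄₁², β}(u) · L¹_{α q̄₀², β}(0), where q̄₁² denotes an inverse of q₁² mod q₀ and q̄₀² an inverse of q₀²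 mod q₁. -/
open scoped Real BigOperators

/-- The `L`-sum of modulus `s` attached to a function `Khat : ℤ → ℂ` (to be thought of as
a normalized Fourier transform of a trace function):
`L_{α,β}(u) = s^{−1/2} Σ_{b mod s, gcd(b+βu,s)=1} Khat(b) e(α (b+βu)^{-1} / s)`. -/
noncomputable def Lsum (s : ℕ) (Khat : ℤ → ℂ) (α β u : ℤ) : ℂ :=
  (Real.sqrt s : ℂ)⁻¹ *
    ∑ b ∈ Finset.range s,
      if Int.gcd ((b : ℤ) + β * u) (s : ℤ) = 1 then
        Khat b *
          e ((α : ℝ) * (((((b : ℤ) + β * u : ℤ) : ZMod s)⁻¹).val : ℝ) / (s : ℝ))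
      else 0

/-! By the Chinese remainder theorem `ZMod (q₀q₁) ≃ ZMod q₀ × ZMod q₁`, and the standard additive
character splits as `e(y/q₀q₁) = e(q̄₁y/q₀) · e(q̄₀y/q₁)`. Hence `K̂(y) = K̂₀(q̄₁y) K̂₁(q̄₀y)`, and since
invertibility and inverses are computed componentwise, the whole `L`-sum splits into a product of
an `L`-sum mod `q₀` and one mod `q₁`, with twists `q̄₁α`, `q̄₀α`. The shift `βuq₁` vanishes mod `q₁`,
and the substitution `b ↦ q₁b` mod `q₀` (resp. `b ↦ q₀b` mod `q₁`) removes the twist from `K̂₀`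
(resp. `K̂₁`) at the cost of squaring it in the character. -/

open ZMod

noncomputable def FhatZMod (s : ℕ) [NeZero s] (F : ZMod s → ℂ) (n : ZMod s) : ℂ :=
  (Real.sqrt s : ℂ)⁻¹ * ∑ x, F x * stdAddChar (n * x)

noncomputable def LsumZMod (s : ℕ) [NeZero s] (H : ZMod s → ℂ) (α c : ZMod s) : ℂ :=
  (Real.sqrt s : ℂ)⁻¹ *
    ∑ b, if IsUnit (b + c) then H b * stdAddChar (α * (b + c)⁻¹) else 0

lemma e_mul_val_div (s : ℕ) [NeZero s] (a : ℤ) (z : ZMod s) :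
    e (a * z.val / s) = stdAddChar ((a : ZMod s) * z) := by
  have hz : (a : ZMod s) * z = ((a * z.val : ℤ) : ZMod s) := by push_cast [natCast_zmod_val]; rfl
  rw [hz, stdAddChar_coe, e]
  push_cast
  ring_nf

lemma Finset.sum_range_eq_sum_zmod_val {M : Type*} [AddCommMonoid M] (s : ℕ) [NeZero s]
    (f : ℕ → M) : ∑ x ∈ Finset.range s, f x = ∑ z : ZMod s, f z.val :=
  Finset.sum_nbij' (↑) ZMod.val (fun _ _ => Finset.mem_univ _)
    (fun z _ => Finset.mem_range.2 z.val_lt)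
    (fun _ hx => val_cast_of_lt (Finset.mem_range.1 hx)) (fun z _ => natCast_zmod_val z)
    (fun _ hx => by rw [val_cast_of_lt (Finset.mem_range.1 hx)])

lemma Function.Periodic.eq_val_intCast {α : Type*} {K : ℤ → α} {s : ℕ} [NeZero s]
    (hK : Function.Periodic K s) (x : ℤ) : K x = K (x : ZMod s).val := by
  rw [val_intCast, Int.emod_def, mul_comm]
  simpa using (hK.sub_int_mul_eq (x / s)).symm

lemma Int.gcd_natCast_eq_one_iff_isUnit (s : ℕ) (m : ℤ) :
    Int.gcd m s = 1 ↔ IsUnit (m : ZMod s) := by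
  rw [coe_int_isUnit_iff_isCoprime, isCoprime_comm, Int.isCoprime_iff_gcd_eq_one]

lemma Fhat_eq_FhatZMod (s : ℕ) [NeZero s] {F : ℤ → ℂ} {F' : ZMod s → ℂ}
    (hF : ∀ x : ℤ, F x = F' x) (n : ℤ) : Fhat s F n = FhatZMod s F' n := by
  rw [Fhat, FhatZMod, Finset.sum_range_eq_sum_zmod_val]
  simp_rw [hF, Int.cast_natCast, natCast_zmod_val, e_mul_val_div]

lemma Lsum_eq_LsumZMod (s : ℕ) [NeZero s] {Khat : ℤ → ℂ} {H : ZMod s → ℂ}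
    (hK : ∀ n : ℤ, Khat n = H n) (α β u : ℤ) :
    Lsum s Khat α β u = LsumZMod s H α (β * u : ℤ) := by
  rw [Lsum, LsumZMod, Finset.sum_range_eq_sum_zmod_val]
  simp_rw [Int.gcd_natCast_eq_one_iff_isUnit, hK, e_mul_val_div]
  push_cast
  simp only [natCast_zmod_val]

lemma ZMod.mul_inv_distrib_of_isUnit {s : ℕ} {t x : ZMod s} (ht : IsUnit t) (hx : IsUnit x) :
    (t * x)⁻¹ = t⁻¹ * x⁻¹ := by
  refine ZMod.inv_eq_of_mul_eq_one _ _ _ ?_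
  rw [mul_mul_mul_comm, mul_inv_of_unit t ht, mul_inv_of_unit x hx, one_mul]

lemma ZMod.intCast_eq_inv_sq {s : ℕ} {a t : ℤ} (h : a * t ^ 2 ≡ 1 [ZMOD s]) :
    (a : ZMod s) = (t : ZMod s)⁻¹ ^ 2 := by
  have h' : (a : ZMod s) * t ^ 2 = 1 := by
    exact_mod_cast (ZMod.intCast_eq_intCast_iff _ _ _).2 h
  rw [ZMod.inv_eq_of_mul_eq_one _ _ ((a : ZMod s) * (t : ZMod s)) (by linear_combination h')]
  linear_combination (-(a : ZMod s)) * h'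

lemma inv_sqrt_natCast_mul (m n : ℕ) :
    ((Real.sqrt (m * n : ℕ) : ℂ))⁻¹ = (Real.sqrt m : ℂ)⁻¹ * (Real.sqrt n : ℂ)⁻¹ := by
  rw [Nat.cast_mul, Real.sqrt_mul (Nat.cast_nonneg m), Complex.ofReal_mul, mul_inv]

section CRT

variable {m n : ℕ}

lemma ZMod.cast_inv_of_isUnit (hmn : m ∣ n) {x : ZMod n} (hx : IsUnit x) :
    (cast x⁻¹ : ZMod m) = (cast x)⁻¹ := by
  refine (ZMod.inv_eq_of_mul_eq_one _ _ _ ?_).symm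
  rw [← cast_mul hmn, mul_inv_of_unit x hx, cast_one hmn]

lemma ZMod.chineseRemainder_apply (h : m.Coprime n) (x : ZMod (m * n)) :
    chineseRemainder h x = (cast x, cast x) :=
  Prod.ext (Prod.fst_zmod_cast x) (Prod.snd_zmod_cast x)

lemma ZMod.isUnit_iff_isUnit_cast (h : m.Coprime n) (x : ZMod (m * n)) :
    IsUnit x ↔ IsUnit (cast x : ZMod m) ∧ IsUnit (cast x : ZMod n) := by
  rw [← isUnit_map_iff (chineseRemainder h), chineseRemainder_apply h, Prod.isUnit_iff]

lemma ZMod.sum_cast_mul_cast [NeZero m] [NeZero n] (h : m.Coprime n) {R : Type*}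
    [CommSemiring R] (f : ZMod m → R) (g : ZMod n → R) :
    ∑ x : ZMod (m * n), f (cast x) * g (cast x) = (∑ y, f y) * ∑ z, g z := by
  rw [Finset.sum_mul_sum, ← Fintype.sum_prod_type']
  exact Fintype.sum_equiv (chineseRemainder h).toEquiv _ _
    (fun x => by simp [chineseRemainder_apply h])

lemma ZMod.stdAddChar_eq_mul_stdAddChar_cast [NeZero m] [NeZero n] (h : m.Coprime n)
    (y : ZMod (m * n)) :
    stdAddChar y =
      stdAddChar ((n : ZMod m)⁻¹ * cast y) * stdAddChar ((m : ZMod n)⁻¹ * cast y) := by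
  obtain ⟨a, b, hab⟩ := Nat.isCoprime_iff_coprime.2 h.symm
  have ha : (n : ZMod m)⁻¹ = a := ZMod.inv_eq_of_mul_eq_one _ _ _ <| by
    simpa [natCast_self, mul_comm] using congrArg (Int.cast : ℤ → ZMod m) hab
  have hb : (m : ZMod n)⁻¹ = b := ZMod.inv_eq_of_mul_eq_one _ _ _ <| by
    simpa [natCast_self, mul_comm] using congrArg (Int.cast : ℤ → ZMod n) hab
  obtain ⟨k, rfl⟩ := ZMod.intCast_surjective y
  rw [ha, hb, cast_intCast (dvd_mul_right m n), cast_intCast (dvd_mul_left n m),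
    ← Int.cast_mul, ← Int.cast_mul, stdAddChar_coe, stdAddChar_coe, stdAddChar_coe,
    ← Complex.exp_add]
  congr 1
  have hab' : (a : ℂ) * n + b * m = 1 := by exact_mod_cast hab
  have hm : (m : ℂ) ≠ 0 := NeZero.ne _
  have hn : (n : ℂ) ≠ 0 := NeZero.ne _
  push_cast
  field_simp
  linear_combination (-(k : ℂ)) * hab'

variable [NeZero m] [NeZero n]

lemma FhatZMod_mul_cast (h : m.Coprime n) (F₀ : ZMod m → ℂ) (F₁ : ZMod n → ℂ)
    (y : ZMod (m * n)) :
    FhatZMod (m * n) (fun x => F₀ (cast x) * F₁ (cast x)) y =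
      FhatZMod m F₀ ((n : ZMod m)⁻¹ * cast y) * FhatZMod n F₁ ((m : ZMod n)⁻¹ * cast y) := by
  rw [FhatZMod, FhatZMod, FhatZMod, mul_mul_mul_comm, ← sum_cast_mul_cast h,
    inv_sqrt_natCast_mul]
  congr 1
  refine Finset.sum_congr rfl fun x _ => ?_
  rw [stdAddChar_eq_mul_stdAddChar_cast h, cast_mul (dvd_mul_right m n),
    cast_mul (dvd_mul_left n m)]
  simp only [← mul_assoc]
  ring

lemma LsumZMod_mul_cast (h : m.Coprime n) (H₀ : ZMod m → ℂ) (H₁ : ZMod n → ℂ)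
    (α c : ZMod (m * n)) :
    LsumZMod (m * n) (fun x => H₀ (cast x) * H₁ (cast x)) α c =
      LsumZMod m H₀ ((n : ZMod m)⁻¹ * cast α) (cast c) *
        LsumZMod n H₁ ((m : ZMod n)⁻¹ * cast α) (cast c) := by
  rw [LsumZMod, LsumZMod, LsumZMod, mul_mul_mul_comm, ← sum_cast_mul_cast h,
    inv_sqrt_natCast_mul]
  refine congrArg (_ * ·) (Finset.sum_congr rfl fun x _ => ?_)
  have hm := dvd_mul_right m n
  have hn := dvd_mul_left n m
  have hu_iff := isUnit_iff_isUnit_cast h (x + c)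
  rw [cast_add hm, cast_add hn] at hu_iff
  by_cases hu : IsUnit (x + c)
  · obtain ⟨hu₀, hu₁⟩ := hu_iff.1 hu
    rw [if_pos hu, if_pos hu₀, if_pos hu₁, stdAddChar_eq_mul_stdAddChar_cast h, cast_mul hm,
      cast_mul hn, cast_inv_of_isUnit hm hu, cast_inv_of_isUnit hn hu, cast_add hm, cast_add hn]
    simp only [← mul_assoc]
    ring
  · rw [if_neg hu]
    by_cases hu₀ : IsUnit ((cast x : ZMod m) + cast c)
    · rw [if_neg (fun hu₁ => hu (hu_iff.2 ⟨hu₀, hu₁⟩)), mul_zero]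
    · rw [if_neg hu₀, zero_mul]

end CRT

lemma LsumZMod_comp_mul_left (s : ℕ) [NeZero s] (H : ZMod s → ℂ) {t : ZMod s} (ht : IsUnit t)
    (α c : ZMod s) :
    LsumZMod s (fun b => H (t⁻¹ * b)) (t⁻¹ * α) (t * c) = LsumZMod s H (t⁻¹ ^ 2 * α) c := by
  rw [LsumZMod, LsumZMod]
  congr 1
  refine (Fintype.sum_bijective (t * ·) ?_ _ _ fun b => ?_).symm
  · simpa using ht.unit.mulLeft_bijective
  · rw [← mul_add, ← mul_assoc, inv_mul_of_unit t ht, one_mul]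
    by_cases hb : IsUnit (b + c)
    · rw [if_pos hb, if_pos (ht.mul hb), mul_inv_distrib_of_isUnit ht hb]
      ring_nf
    · rw [if_neg hb, if_neg (fun h => hb (isUnit_of_mul_isUnit_right h))]

lemma LsumZMod_FhatZMod_mul_cast {m n : ℕ} [NeZero m] [NeZero n] (h : m.Coprime n)
    (F₀ : ZMod m → ℂ) (F₁ : ZMod n → ℂ) (α w : ZMod (m * n)) :
    LsumZMod (m * n) (FhatZMod (m * n) fun x => F₀ (cast x) * F₁ (cast x)) α (n * w) =
      LsumZMod m (FhatZMod m F₀) ((n : ZMod m)⁻¹ ^ 2 * cast α) (cast w) *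
        LsumZMod n (FhatZMod n F₁) ((m : ZMod n)⁻¹ ^ 2 * cast α) 0 := by
  have hm := dvd_mul_right m n
  have hn := dvd_mul_left n m
  have hc₀ : (cast ((n : ZMod (m * n)) * w) : ZMod m) = n * cast w := by
    rw [cast_mul hm, cast_natCast hm]
  have hc₁ : (cast ((n : ZMod (m * n)) * w) : ZMod n) = m * 0 := by
    rw [cast_mul hn, cast_natCast hn, natCast_self, zero_mul, mul_zero]
  rw [funext (FhatZMod_mul_cast h F₀ F₁),
    LsumZMod_mul_cast h (fun b => FhatZMod m F₀ (_ * b)) (fun b => FhatZMod n F₁ (_ * b)),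
    hc₀, hc₁, LsumZMod_comp_mul_left m _ ((isUnit_iff_coprime n m).2 h.symm),
    LsumZMod_comp_mul_left n _ ((isUnit_iff_coprime m n).2 h)]

/-- Factorization of the `L`-sums under twisted multiplicativity: for `q₀ ≠ q₁` primes,
`q = q₀q₁`, `K₀` `q₀`-periodic, `K₁` `q₁`-periodic and `K = K₀K₁`, one has
`L_{α,β}(u q₁; q) = L⁰_{α q̄₁², β}(u) · L¹_{α q̄₀², β}(0)`, where `q̄₁² q₁² ≡ 1 (mod q₀)`
and `q̄₀² q₀² ≡ 1 (mod q₁)`, `L` is formed with `K̂(·; q)`, `L⁰` with `K̂₀(·; q₀)` and `L¹`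
with `K̂₁(·; q₁)`. -/
theorem Lsum_factorization (q₀ q₁ : ℕ) (hq₀ : q₀.Prime) (hq₁ : q₁.Prime) (hne : q₀ ≠ q₁)
    (K₀ K₁ : ℤ → ℂ) (hK₀ : ∀ x : ℤ, K₀ (x + (q₀ : ℤ)) = K₀ x)
    (hK₁ : ∀ x : ℤ, K₁ (x + (q₁ : ℤ)) = K₁ x)
    (qb₁sq qb₀sq : ℤ) (hqb₁sq : qb₁sq * (q₁ : ℤ) ^ 2 ≡ 1 [ZMOD (q₀ : ℤ)])
    (hqb₀sq : qb₀sq * (q₀ : ℤ) ^ 2 ≡ 1 [ZMOD (q₁ : ℤ)]) (α β u : ℤ) :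
    Lsum (q₀ * q₁) (Fhat (q₀ * q₁) (fun x => K₀ x * K₁ x)) α β (u * (q₁ : ℤ)) =
      Lsum q₀ (Fhat q₀ K₀) (α * qb₁sq) β u * Lsum q₁ (Fhat q₁ K₁) (α * qb₀sq) β 0 := by
  have : NeZero q₀ := ⟨hq₀.ne_zero⟩
  have : NeZero q₁ := ⟨hq₁.ne_zero⟩
  have hm := dvd_mul_right q₀ q₁
  have hn := dvd_mul_left q₁ q₀
  have hK₀' : ∀ x : ℤ, K₀ x = K₀ (x : ZMod q₀).val := Function.Periodic.eq_val_intCast hK₀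
  have hK₁' : ∀ x : ℤ, K₁ x = K₁ (x : ZMod q₁).val := Function.Periodic.eq_val_intCast hK₁
  have hK : ∀ x : ℤ, K₀ x * K₁ x = K₀ (cast (x : ZMod (q₀ * q₁)) : ZMod q₀).val *
      K₁ (cast (x : ZMod (q₀ * q₁)) : ZMod q₁).val := fun x => by
    rw [cast_intCast hm, cast_intCast hn, ← hK₀', ← hK₁']
  have hshift : ((β * (u * q₁) : ℤ) : ZMod (q₀ * q₁)) = q₁ * ((β * u : ℤ) : ZMod (q₀ * q₁)) := by
    push_cast
    ring
  rw [Lsum_eq_LsumZMod _ (Fhat_eq_FhatZMod _ (F' := fun y => K₀ (cast y : ZMod q₀).val *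
      K₁ (cast y : ZMod q₁).val) hK), hshift,
    LsumZMod_FhatZMod_mul_cast ((Nat.coprime_primes hq₀ hq₁).2 hne) (fun z => K₀ z.val)
      (fun z => K₁ z.val),
    Lsum_eq_LsumZMod _ (Fhat_eq_FhatZMod _ (F' := fun z => K₀ z.val) hK₀'),
    Lsum_eq_LsumZMod _ (Fhat_eq_FhatZMod _ (F' := fun z => K₁ z.val) hK₁'),
    cast_intCast hm, cast_intCast hm, cast_intCast hn]
  push_cast [ZMod.intCast_eq_inv_sq hqb₁sq, ZMod.intCast_eq_inv_sq hqb₀sq]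
  ring_nf
end

section
/- Twisted multiplicativity of Kloosterman sums: let m and n be coprime positive integers, and let n̄ be an inverse of n mod m and m̄ an inverse of m mod n. Then for all integers a, b, S(a, b; mn) = S(a n̄, b n̄; m) · S(a m̄, b m̄; n). -/
/-!
The Chinese remainder theorem identifies the units of `ZMod (m * n)` with pairs of units of
`ZMod m` and `ZMod n`. Since `n̄ n + m̄ m ≡ 1 (mod mn)`, we have `1 / (mn) ≡ n̄ / m + m̄ / n`
modulo `1`, so the standard additive character of `ZMod (m * n)` factors as
`ψ_{mn}(x) = ψ_m(n̄ x) ψ_n(m̄ x)`. Writing each Kloosterman sum as a sum of `ψ(a u + b u⁻¹)` over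
units, the sum over `(ZMod (m * n))ˣ` thus splits into the product of the two smaller sums.
-/

open scoped Real BigOperators

noncomputable def KS (a b : ℤ) (c : ℕ) : ℂ :=
  ∑ x ∈ (Finset.range c).filter (fun x => Nat.Coprime x c),
    e ((((a * (x : ℤ) + b * ((((x : ℕ) : ZMod c)⁻¹).val : ℤ)) : ℤ) : ℝ) / (c : ℝ))

open Finset ZMod

lemma e_intCast_div_s11 (c : ℕ) [NeZero c] (t : ℤ) : e ((t : ℝ) / c) = stdAddChar (t : ZMod c) := by
  rw [e, stdAddChar_coe]
  push_cast
  ring_nf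

lemma sum_filter_coprime_range_eq_sum_units {M : Type*} [AddCommMonoid M] (c : ℕ) [NeZero c]
    (f : ZMod c → M) :
    ∑ x ∈ (range c).filter (Nat.Coprime · c), f x = ∑ u : (ZMod c)ˣ, f u := by
  refine sum_bij' (fun x hx ↦ unitOfCoprime x (mem_filter.mp hx).2) (fun u _ ↦ (u : ZMod c).val)
    (fun _ _ ↦ mem_univ _)
    (fun u _ ↦ mem_filter.mpr ⟨mem_range.mpr (val_lt _), val_coe_unit_coprime u⟩)
    (fun x hx ↦ ?_) (fun u _ ↦ Units.ext (natCast_zmod_val _)) (fun _ _ ↦ by simp)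
  rw [coe_unitOfCoprime, val_cast_of_lt (mem_range.mp (mem_filter.mp hx).1)]

lemma KS_eq_sum_units (a b : ℤ) (c : ℕ) [NeZero c] :
    KS a b c = ∑ u : (ZMod c)ˣ, stdAddChar (a * u + b * ↑u⁻¹ : ZMod c) := by
  simp_rw [KS, e_intCast_div_s11]
  push_cast
  simp_rw [natCast_val, cast_id', id]
  rw [sum_filter_coprime_range_eq_sum_units c (fun y ↦ stdAddChar (a * y + b * y⁻¹ : ZMod c))]
  simp_rw [inv_coe_unit]

lemma Int.mul_add_mul_modEq_one {m n : ℕ} (hcop : m.Coprime n) {nbar mbar : ℤ}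
    (hnbar : nbar * n ≡ 1 [ZMOD m]) (hmbar : mbar * m ≡ 1 [ZMOD n]) :
    nbar * n + mbar * m ≡ 1 [ZMOD m * n] := by
  refine (Int.modEq_and_modEq_iff_modEq_mul (by simpa using hcop)).mp ⟨?_, ?_⟩
  · simpa using hnbar.add (Int.modEq_zero_iff_dvd.mpr (dvd_mul_left (m : ℤ) mbar))
  · simpa using (Int.modEq_zero_iff_dvd.mpr (dvd_mul_left (n : ℤ) nbar)).add hmbar

lemma stdAddChar_eq_mul_of_modEq {m n : ℕ} [NeZero m] [NeZero n] {nbar mbar : ℤ}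
    (h : nbar * n + mbar * m ≡ 1 [ZMOD m * n]) (x : ZMod (m * n)) :
    stdAddChar x = stdAddChar ((nbar : ZMod m) * castHom (dvd_mul_right m n) (ZMod m) x) *
      stdAddChar ((mbar : ZMod n) * castHom (dvd_mul_left n m) (ZMod n) x) := by
  obtain ⟨k, hk⟩ := h.dvd
  rw [castHom_apply, castHom_apply, ← intCast_zmod_cast x, cast_intCast (dvd_mul_right m n),
    cast_intCast (dvd_mul_left n m)]
  set t : ℤ := cast x
  simp only [← Int.cast_mul, stdAddChar_coe, ← Complex.exp_add]
  refine Complex.exp_eq_exp_iff_exists_int.mpr ⟨t * k, ?_⟩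
  have hkC : (1 : ℂ) - (nbar * n + mbar * m) = m * n * k := by exact_mod_cast hk
  have : (m : ℂ) ≠ 0 := Nat.cast_ne_zero.mpr (NeZero.ne m)
  have : (n : ℂ) ≠ 0 := Nat.cast_ne_zero.mpr (NeZero.ne n)
  push_cast
  field_simp
  linear_combination (t : ℂ) * hkC

lemma ZMod.chineseRemainder_fst {m n : ℕ} (h : m.Coprime n) (x : ZMod (m * n)) :
    (chineseRemainder h x).1 = castHom (dvd_mul_right m n) (ZMod m) x :=
  RingHom.congr_fun (RingHom.ext_zmod ((RingHom.fst _ _).comp (chineseRemainder h).toRingHom)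
    (castHom (dvd_mul_right m n) (ZMod m))) x

lemma ZMod.chineseRemainder_snd {m n : ℕ} (h : m.Coprime n) (x : ZMod (m * n)) :
    (chineseRemainder h x).2 = castHom (dvd_mul_left n m) (ZMod n) x :=
  RingHom.congr_fun (RingHom.ext_zmod ((RingHom.snd _ _).comp (chineseRemainder h).toRingHom)
    (castHom (dvd_mul_left n m) (ZMod n))) x

def ZMod.unitsChineseRemainder {m n : ℕ} (h : m.Coprime n) :
    (ZMod (m * n))ˣ ≃* (ZMod m)ˣ × (ZMod n)ˣ :=
  (Units.mapEquiv (chineseRemainder h).toMulEquiv).trans .prodUnits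

lemma ZMod.coe_unitsChineseRemainder_fst {m n : ℕ} (h : m.Coprime n) (u : (ZMod (m * n))ˣ) :
    ((unitsChineseRemainder h u).1 : ZMod m) = castHom (dvd_mul_right m n) (ZMod m) u :=
  chineseRemainder_fst h u

lemma ZMod.coe_unitsChineseRemainder_snd {m n : ℕ} (h : m.Coprime n) (u : (ZMod (m * n))ˣ) :
    ((unitsChineseRemainder h u).2 : ZMod n) = castHom (dvd_mul_left n m) (ZMod n) u :=
  chineseRemainder_snd h u

/-- Twisted multiplicativity of Kloosterman sums: for `m, n` coprime positive integers,
`n̄ n ≡ 1 (mod m)`, `m̄ m ≡ 1 (mod n)`, and all integers `a, b`,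
`S(a, b; mn) = S(a n̄, b n̄; m) · S(a m̄, b m̄; n)`. -/
theorem kloosterman_twisted_multiplicativity (m n : ℕ) (hm : 0 < m) (hn : 0 < n)
    (hcop : Nat.Coprime m n) (nbar mbar : ℤ)
    (hnbar : nbar * (n : ℤ) ≡ 1 [ZMOD (m : ℤ)]) (hmbar : mbar * (m : ℤ) ≡ 1 [ZMOD (n : ℤ)])
    (a b : ℤ) :
    KS a b (m * n) = KS (a * nbar) (b * nbar) m * KS (a * mbar) (b * mbar) n := by
  have : NeZero m := ⟨hm.ne'⟩
  have : NeZero n := ⟨hn.ne'⟩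
  rw [KS_eq_sum_units, KS_eq_sum_units, KS_eq_sum_units, sum_mul_sum, ← Fintype.sum_prod_type']
  refine Fintype.sum_equiv (unitsChineseRemainder hcop).toEquiv _ _ fun u ↦ ?_
  have hinv_fst := coe_unitsChineseRemainder_fst hcop u⁻¹
  have hinv_snd := coe_unitsChineseRemainder_snd hcop u⁻¹
  simp only [map_inv, Prod.fst_inv, Prod.snd_inv] at hinv_fst hinv_snd
  simp only [MulEquiv.toEquiv_eq_coe, EquivLike.coe_coe, hinv_fst, hinv_snd,
    coe_unitsChineseRemainder_fst, coe_unitsChineseRemainder_snd,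
    stdAddChar_eq_mul_of_modEq (Int.mul_add_mul_modEq_one hcop hnbar hmbar),
    map_add, map_mul, map_intCast, Int.cast_mul]
  ring_nf
end
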